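/- Let p ≥ 2, let K ⊆ ℝ^p be compact, let φ ∈ C^∞(ℝ^p) have compact support contained in K, and let ψ_0 ∈ Ψ. Then there exists ε = ε(φ,ψ_0) > 0 such that for every smooth symmetric 2-tensor field ψ_1 on ℝ^p with |ψ_1|_K < ε, one has ψ_0 + φ·ψ_1 ∈ Ψ. -/

import Mathlib

open scoped BigOperators

/-- The partial derivative `∂ₖ f` at `x`. -/
noncomputable def pd {p : ℕ} (f : (Fin p → ℝ) → ℝ) (k : Fin p) (x : Fin p → ℝ) : ℝ :=
  fderiv ℝ f x (Pi.single k 1)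

/-- The second partial derivative `∂ₖ ∂ₗ f` at `x`. -/
noncomputable def pd2 {p : ℕ} (f : (Fin p → ℝ) → ℝ) (k l : Fin p) (x : Fin p → ℝ) : ℝ :=
  pd (pd f l) k x

/-- The curvature components
`R_ψ(i,j,k,l) := -(1/2)(ψ_{il/jk} + ψ_{jk/il} - ψ_{ik/jl} - ψ_{jl/ik})`,
where `ψ_{ab/cd} := ∂_c ∂_d ψ_{ab}`. -/
noncomputable def curv {p : ℕ} (ψ : (Fin p → ℝ) → Fin p → Fin p → ℝ)
    (i j k l : Fin p) (x : Fin p → ℝ) : ℝ :=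
  -(1/2) * (pd2 (fun y => ψ y i l) j k x + pd2 (fun y => ψ y j k) i l x
    - pd2 (fun y => ψ y i k) j l x - pd2 (fun y => ψ y j l) i k x)

/-- The Jacobi bilinear form `𝒥_ψ(x;X)(Y,Z) := Σ R_ψ(i,j,k,l)(x) Yᵢ Xⱼ Xₖ Zₗ`. -/
noncomputable def jacobiForm {p : ℕ} (ψ : (Fin p → ℝ) → Fin p → Fin p → ℝ)
    (x X Y Z : Fin p → ℝ) : ℝ :=
  ∑ i, ∑ j, ∑ k, ∑ l, curv ψ i j k l x * Y i * X j * X k * Z l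

/-- `ψ` is a smooth symmetric 2-tensor field on `ℝ^p`. -/
def IsSmoothSym {p : ℕ} (ψ : (Fin p → ℝ) → Fin p → Fin p → ℝ) : Prop :=
  (∀ i j, ContDiff ℝ (⊤ : ℕ∞) fun x => ψ x i j) ∧ ∀ x i j, ψ x i j = ψ x j i

/-- Membership in the class `Ψ`: `ψ` is a smooth symmetric 2-tensor field such that for every
`x` and every `X ≠ 0` the Jacobi form `𝒥_ψ(x;X)` is positive semidefinite with null space
exactly the line `ℝ·X` (i.e. positive semidefinite of rank `p-1`). -/
def MemPsi {p : ℕ} (ψ : (Fin p → ℝ) → Fin p → Fin p → ℝ) : Prop :=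
  IsSmoothSym ψ ∧ ∀ (x X : Fin p → ℝ), X ≠ 0 →
    (∀ Y, 0 ≤ jacobiForm ψ x X Y Y) ∧
    ∀ Y, (∀ Z, jacobiForm ψ x X Y Z = 0) ↔ ∃ c : ℝ, Y = c • X


section AuxLemmas

variable {p : ℕ}

private lemma pd_contDiff' {f : (Fin p → ℝ) → ℝ} (hf : ContDiff ℝ (⊤ : ℕ∞) f) (k : Fin p) :
    ContDiff ℝ (⊤ : ℕ∞) (pd f k) := by
  unfold pd
  exact (hf.fderiv_right (by simp)).clm_apply contDiff_const

private lemma pd2_contDiff' {f : (Fin p → ℝ) → ℝ} (hf : ContDiff ℝ (⊤ : ℕ∞) f) (k l : Fin p) :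
    ContDiff ℝ (⊤ : ℕ∞) (pd2 f k l) := pd_contDiff' (pd_contDiff' hf l) k

private lemma pd_add' {f g : (Fin p → ℝ) → ℝ} (hf : Differentiable ℝ f)
    (hg : Differentiable ℝ g) (k : Fin p) (x : Fin p → ℝ) :
    pd (fun y => f y + g y) k x = pd f k x + pd g k x := by
  unfold pd
  rw [fderiv_fun_add (hf x) (hg x)]; rfl

private lemma pd_mul' {f g : (Fin p → ℝ) → ℝ} (hf : Differentiable ℝ f)
    (hg : Differentiable ℝ g) (k : Fin p) (x : Fin p → ℝ) :
    pd (fun y => f y * g y) k x = pd f k x * g x + f x * pd g k x := by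
  unfold pd
  rw [fderiv_fun_mul (hf x) (hg x)]
  simp only [ContinuousLinearMap.add_apply, ContinuousLinearMap.smul_apply, smul_eq_mul]
  ring

private lemma pd2_add' {f g : (Fin p → ℝ) → ℝ} (hf : ContDiff ℝ (⊤ : ℕ∞) f)
    (hg : ContDiff ℝ (⊤ : ℕ∞) g) (k l : Fin p) (x : Fin p → ℝ) :
    pd2 (fun y => f y + g y) k l x = pd2 f k l x + pd2 g k l x := by
  unfold pd2
  have h1 : pd (fun y => f y + g y) l = fun y => pd f l y + pd g l y :=
    funext fun y => pd_add' (hf.differentiable (by simp)) (hg.differentiable (by simp)) l y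
  rw [h1, pd_add' ((pd_contDiff' hf l).differentiable (by simp))
    ((pd_contDiff' hg l).differentiable (by simp))]

private lemma pd2_mul' {f g : (Fin p → ℝ) → ℝ} (hf : ContDiff ℝ (⊤ : ℕ∞) f)
    (hg : ContDiff ℝ (⊤ : ℕ∞) g) (k l : Fin p) (x : Fin p → ℝ) :
    pd2 (fun y => f y * g y) k l x
      = pd2 f k l x * g x + pd f l x * pd g k x + pd f k x * pd g l x + f x * pd2 g k l x := by
  unfold pd2
  have h1 : pd (fun y => f y * g y) l = fun y => pd f l y * g y + f y * pd g l y :=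
    funext fun y => pd_mul' (hf.differentiable (by simp)) (hg.differentiable (by simp)) l y
  rw [h1, pd_add' (f := fun y => pd f l y * g y) (g := fun y => f y * pd g l y) (((pd_contDiff' hf l).differentiable (by simp)).mul (hg.differentiable (by simp)))
    ((hf.differentiable (by simp)).mul ((pd_contDiff' hg l).differentiable (by simp))),
    pd_mul' ((pd_contDiff' hf l).differentiable (by simp)) (hg.differentiable (by simp)),
    pd_mul' (hf.differentiable (by simp)) ((pd_contDiff' hg l).differentiable (by simp))]
  ring

private lemma pd_eventuallyEq_zero {f : (Fin p → ℝ) → ℝ} {x : Fin p → ℝ}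
    (h : f =ᶠ[nhds x] 0) (k : Fin p) : pd f k =ᶠ[nhds x] 0 := by
  have h2 : ∀ᶠ y in nhds x, f =ᶠ[nhds y] 0 := h.eventually_nhds
  filter_upwards [h2] with y hy
  unfold pd
  rw [hy.fderiv_eq]
  have h0 : (0 : (Fin p → ℝ) → ℝ) = fun _ => (0:ℝ) := rfl
  rw [h0, fderiv_fun_const]
  simp

private lemma pd2_eq_zero_of_eventuallyEq_zero {f : (Fin p → ℝ) → ℝ} {x : Fin p → ℝ}
    (h : f =ᶠ[nhds x] 0) (k l : Fin p) : pd2 f k l x = 0 := by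
  have h1 : pd f l =ᶠ[nhds x] 0 := pd_eventuallyEq_zero h l
  have h2 : pd (pd f l) k =ᶠ[nhds x] 0 := pd_eventuallyEq_zero h1 k
  exact h2.self_of_nhds

private lemma pd2_symm' {f : (Fin p → ℝ) → ℝ} (hf : ContDiff ℝ (⊤ : ℕ∞) f) (k l : Fin p)
    (x : Fin p → ℝ) : pd2 f k l x = pd2 f l k x := by
  have hd : ∀ y, HasFDerivAt f (fderiv ℝ f y) y := fun y => (hf.differentiable (by simp) y).hasFDerivAt
  have hf' : ContDiff ℝ (⊤ : ℕ∞) (fderiv ℝ f) := hf.fderiv_right (by simp)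
  have hd2 : HasFDerivAt (fderiv ℝ f) (fderiv ℝ (fderiv ℝ f) x) x :=
    (hf'.differentiable (by simp) x).hasFDerivAt
  have hsymm := second_derivative_symmetric hd hd2
  have key : ∀ v w : Fin p → ℝ,
      fderiv ℝ (fun y => fderiv ℝ f y v) x w = fderiv ℝ (fderiv ℝ f) x w v := by
    intro v w
    rw [fderiv_clm_apply (hf'.differentiable (by simp) x) (differentiableAt_const v)]
    simp
  unfold pd2 pd
  rw [key, key, hsymm]

private lemma sum4_congr {f g : Fin p → Fin p → Fin p → Fin p → ℝ}
    (h : ∀ i j k l, f i j k l = g i j k l) :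
    ∑ i, ∑ j, ∑ k, ∑ l, f i j k l = ∑ i, ∑ j, ∑ k, ∑ l, g i j k l :=
  Finset.sum_congr rfl fun i _ => Finset.sum_congr rfl fun j _ =>
    Finset.sum_congr rfl fun k _ => Finset.sum_congr rfl fun l _ => h i j k l

private lemma sum4_rev (f : Fin p → Fin p → Fin p → Fin p → ℝ) :
    ∑ i, ∑ j, ∑ k, ∑ l, f i j k l = ∑ i, ∑ j, ∑ k, ∑ l, f l k j i := by
  have h1 : ∀ g : Fin p → Fin p → Fin p → Fin p → ℝ,
      ∑ q : Fin p × Fin p × Fin p × Fin p, g q.1 q.2.1 q.2.2.1 q.2.2.2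
        = ∑ i, ∑ j, ∑ k, ∑ l, g i j k l := by
    intro g
    rw [Fintype.sum_prod_type]
    congr 1; funext i
    rw [Fintype.sum_prod_type]
    congr 1; funext j
    rw [Fintype.sum_prod_type]
  rw [← h1, ← h1]
  exact Fintype.sum_equiv
    ⟨fun q => (q.2.2.2, q.2.2.1, q.2.1, q.1), fun q => (q.2.2.2, q.2.2.1, q.2.1, q.1),
      fun q => rfl, fun q => rfl⟩ _ _ (fun q => rfl)

private lemma sum2_antisym {A : Fin p → Fin p → ℝ} (h : ∀ a b, A a b = - A b a) :
    ∑ a, ∑ b, A a b = 0 := by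
  have h1 : (∑ a, ∑ b, A a b) = ∑ b, ∑ a, A a b := Finset.sum_comm
  have h2 : (∑ b : Fin p, ∑ a, A a b) = - ∑ b, ∑ a, A b a := by
    rw [← Finset.sum_neg_distrib]
    refine Finset.sum_congr rfl fun b _ => ?_
    rw [← Finset.sum_neg_distrib]
    exact Finset.sum_congr rfl fun a _ => h a b
  have h3 : (∑ a, ∑ b, A a b) = - ∑ a, ∑ b, A a b := by conv_lhs => rw [h1, h2]
  linarith

private lemma abs_sum_le_of {f : Fin p → ℝ} {C : ℝ} (h : ∀ i, |f i| ≤ C) :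
    |∑ i, f i| ≤ (p : ℝ) * C := by
  calc |∑ i, f i| ≤ ∑ i, |f i| := Finset.abs_sum_le_sum_abs f _
    _ ≤ ∑ _i : Fin p, C := Finset.sum_le_sum fun i _ => h i
    _ = (p : ℝ) * C := by simp [Finset.sum_const, Finset.card_univ, nsmul_eq_mul]

private lemma curv_antisym₁ (ψ : (Fin p → ℝ) → Fin p → Fin p → ℝ) (i j k l : Fin p)
    (x : Fin p → ℝ) : curv ψ j i k l x = - curv ψ i j k l x := by unfold curv; ring

private lemma curv_antisym₂ (ψ : (Fin p → ℝ) → Fin p → Fin p → ℝ) (i j k l : Fin p)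
    (x : Fin p → ℝ) : curv ψ i j l k x = - curv ψ i j k l x := by unfold curv; ring

private lemma curv_symm_pair {ψ : (Fin p → ℝ) → Fin p → Fin p → ℝ}
    (hs : ∀ i j, ContDiff ℝ (⊤ : ℕ∞) fun x => ψ x i j)
    (hsym : ∀ x i j, ψ x i j = ψ x j i) (i j k l : Fin p) (x : Fin p → ℝ) :
    curv ψ l k j i x = curv ψ i j k l x := by
  have h1 : ∀ a b c d : Fin p, pd2 (fun y => ψ y a b) c d x
      = pd2 (fun y => ψ y b a) d c x := by
    intro a b c d
    rw [show (fun y => ψ y a b) = fun y => ψ y b a from funext fun y => hsym y a b,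
      pd2_symm' (hs b a)]
  unfold curv
  rw [h1 l i k j, h1 k j l i, h1 l j k i, h1 k i l j]
  ring

private lemma curv_add' {ψ χ : (Fin p → ℝ) → Fin p → Fin p → ℝ}
    (hψ : ∀ i j, ContDiff ℝ (⊤ : ℕ∞) fun x => ψ x i j)
    (hχ : ∀ i j, ContDiff ℝ (⊤ : ℕ∞) fun x => χ x i j)
    {Ψ : (Fin p → ℝ) → Fin p → Fin p → ℝ} (hΨ : ∀ y a b, Ψ y a b = ψ y a b + χ y a b)
    (i j k l : Fin p) (x : Fin p → ℝ) :
    curv Ψ i j k l x = curv ψ i j k l x + curv χ i j k l x := by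
  unfold curv
  rw [show (fun y => Ψ y i l) = fun y => ψ y i l + χ y i l from funext fun y => hΨ y i l,
    show (fun y => Ψ y j k) = fun y => ψ y j k + χ y j k from funext fun y => hΨ y j k,
    show (fun y => Ψ y i k) = fun y => ψ y i k + χ y i k from funext fun y => hΨ y i k,
    show (fun y => Ψ y j l) = fun y => ψ y j l + χ y j l from funext fun y => hΨ y j l,
    pd2_add' (hψ i l) (hχ i l), pd2_add' (hψ j k) (hχ j k),
    pd2_add' (hψ i k) (hχ i k), pd2_add' (hψ j l) (hχ j l)]
  ring

private lemma curv_continuous {ψ : (Fin p → ℝ) → Fin p → Fin p → ℝ}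
    (hψ : ∀ i j, ContDiff ℝ (⊤ : ℕ∞) fun x => ψ x i j) (i j k l : Fin p) :
    Continuous (curv ψ i j k l) := by
  unfold curv
  exact continuous_const.mul
    ((((pd2_contDiff' (hψ i l) j k).continuous.add (pd2_contDiff' (hψ j k) i l).continuous).sub
      (pd2_contDiff' (hψ i k) j l).continuous).sub (pd2_contDiff' (hψ j l) i k).continuous)

private lemma jacobi_add_left (ψ : (Fin p → ℝ) → Fin p → Fin p → ℝ) (x X Y Y' Z : Fin p → ℝ) :
    jacobiForm ψ x X (Y + Y') Z = jacobiForm ψ x X Y Z + jacobiForm ψ x X Y' Z := by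
  unfold jacobiForm
  rw [sum4_congr (g := fun i j k l => curv ψ i j k l x * Y i * X j * X k * Z l
      + curv ψ i j k l x * Y' i * X j * X k * Z l)
    (fun i j k l => by simp only [Pi.add_apply]; ring)]
  simp [Finset.sum_add_distrib]

private lemma jacobi_smul_left (ψ : (Fin p → ℝ) → Fin p → Fin p → ℝ) (c : ℝ)
    (x X Y Z : Fin p → ℝ) :
    jacobiForm ψ x X (c • Y) Z = c * jacobiForm ψ x X Y Z := by
  unfold jacobiForm
  simp only [Finset.mul_sum]
  exact sum4_congr fun i j k l => by simp only [Pi.smul_apply, smul_eq_mul]; ring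

private lemma jacobi_add_right (ψ : (Fin p → ℝ) → Fin p → Fin p → ℝ) (x X Y Z Z' : Fin p → ℝ) :
    jacobiForm ψ x X Y (Z + Z') = jacobiForm ψ x X Y Z + jacobiForm ψ x X Y Z' := by
  unfold jacobiForm
  rw [sum4_congr (g := fun i j k l => curv ψ i j k l x * Y i * X j * X k * Z l
      + curv ψ i j k l x * Y i * X j * X k * Z' l)
    (fun i j k l => by simp only [Pi.add_apply]; ring)]
  simp [Finset.sum_add_distrib]

private lemma jacobi_smul_right (ψ : (Fin p → ℝ) → Fin p → Fin p → ℝ) (c : ℝ)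
    (x X Y Z : Fin p → ℝ) :
    jacobiForm ψ x X Y (c • Z) = c * jacobiForm ψ x X Y Z := by
  unfold jacobiForm
  simp only [Finset.mul_sum]
  exact sum4_congr fun i j k l => by simp only [Pi.smul_apply, smul_eq_mul]; ring

private lemma jacobi_smul_X (ψ : (Fin p → ℝ) → Fin p → Fin p → ℝ) (s : ℝ)
    (x X Y Z : Fin p → ℝ) :
    jacobiForm ψ x (s • X) Y Z = s^2 * jacobiForm ψ x X Y Z := by
  unfold jacobiForm
  simp only [Finset.mul_sum]
  exact sum4_congr fun i j k l => by simp only [Pi.smul_apply, smul_eq_mul]; ring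

private lemma jacobi_zero_left (ψ : (Fin p → ℝ) → Fin p → Fin p → ℝ) (x X Z : Fin p → ℝ) :
    jacobiForm ψ x X 0 Z = 0 := by
  simp [jacobiForm]

private lemma jacobi_X_left (ψ : (Fin p → ℝ) → Fin p → Fin p → ℝ) (x X Z : Fin p → ℝ) :
    jacobiForm ψ x X X Z = 0 := by
  unfold jacobiForm
  refine sum2_antisym (A := fun a b => ∑ k, ∑ l, curv ψ a b k l x * X a * X b * X k * Z l) ?_
  intro a b
  rw [← Finset.sum_neg_distrib]
  refine Finset.sum_congr rfl fun k _ => ?_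
  rw [← Finset.sum_neg_distrib]
  refine Finset.sum_congr rfl fun l _ => ?_
  rw [curv_antisym₁ ψ a b k l x]
  ring

private lemma jacobi_X_right (ψ : (Fin p → ℝ) → Fin p → Fin p → ℝ) (x X Y : Fin p → ℝ) :
    jacobiForm ψ x X Y X = 0 := by
  unfold jacobiForm
  refine Finset.sum_eq_zero fun i _ => Finset.sum_eq_zero fun j _ => ?_
  refine sum2_antisym (A := fun k l => curv ψ i j k l x * Y i * X j * X k * X l) ?_
  intro a b
  show curv ψ i j a b x * Y i * X j * X a * X b
      = -(curv ψ i j b a x * Y i * X j * X b * X a)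
  rw [curv_antisym₂ ψ i j b a x]
  ring

private lemma jacobi_symm {ψ : (Fin p → ℝ) → Fin p → Fin p → ℝ}
    (hs : ∀ i j, ContDiff ℝ (⊤ : ℕ∞) fun x => ψ x i j)
    (hsym : ∀ x i j, ψ x i j = ψ x j i) (x X Y Z : Fin p → ℝ) :
    jacobiForm ψ x X Y Z = jacobiForm ψ x X Z Y := by
  unfold jacobiForm
  rw [sum4_rev]
  exact sum4_congr fun i j k l => by rw [curv_symm_pair hs hsym i j k l x]; ring

private lemma jacobi_abs_le {ψ : (Fin p → ℝ) → Fin p → Fin p → ℝ} {x X Y Z : Fin p → ℝ} {C : ℝ}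
    (hC : ∀ i j k l, |curv ψ i j k l x| ≤ C)
    (hX : ∀ i, |X i| ≤ 1) (hY : ∀ i, |Y i| ≤ 1) (hZ : ∀ i, |Z i| ≤ 1) :
    |jacobiForm ψ x X Y Z| ≤ (p:ℝ)^4 * C := by
  have h4 : ∀ i j k l, |curv ψ i j k l x * Y i * X j * X k * Z l| ≤ C := by
    intro i j k l
    have hC0 : 0 ≤ C := le_trans (abs_nonneg _) (hC i j k l)
    calc |curv ψ i j k l x * Y i * X j * X k * Z l|
        = |curv ψ i j k l x| * |Y i| * |X j| * |X k| * |Z l| := by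
          rw [abs_mul, abs_mul, abs_mul, abs_mul]
      _ ≤ C * 1 * 1 * 1 * 1 := by
          gcongr
          · exact hC i j k l
          · exact hY i
          · exact hX j
          · exact hX k
          · exact hZ l
      _ = C := by ring
  have h3 : ∀ i j k, |∑ l, curv ψ i j k l x * Y i * X j * X k * Z l| ≤ (p:ℝ) * C :=
    fun i j k => abs_sum_le_of (h4 i j k)
  have h2 : ∀ i j, |∑ k, ∑ l, curv ψ i j k l x * Y i * X j * X k * Z l|
      ≤ (p:ℝ) * ((p:ℝ) * C) := fun i j => abs_sum_le_of (h3 i j)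
  have h1 : ∀ i, |∑ j, ∑ k, ∑ l, curv ψ i j k l x * Y i * X j * X k * Z l|
      ≤ (p:ℝ) * ((p:ℝ) * ((p:ℝ) * C)) := fun i => abs_sum_le_of (h2 i)
  have h0 := abs_sum_le_of h1
  calc |jacobiForm ψ x X Y Z| ≤ (p:ℝ) * ((p:ℝ) * ((p:ℝ) * ((p:ℝ) * C))) := h0
    _ = (p:ℝ)^4 * C := by ring

private lemma comp_abs_le_one {X : Fin p → ℝ} (h : ∑ i, X i * X i = 1) (i : Fin p) :
    |X i| ≤ 1 := by
  rw [abs_le_one_iff_mul_self_le_one]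
  calc X i * X i ≤ ∑ j, X j * X j :=
        Finset.single_le_sum (fun j _ => mul_self_nonneg (X j)) (Finset.mem_univ i)
    _ = 1 := h

end AuxLemmas

set_option maxHeartbeats 1000000 in
/-- Let `K ⊆ ℝ^p` be compact, `φ` smooth with compact support contained in
`K`, and `ψ₀ ∈ Ψ`. Then there exists `ε > 0` so that for every smooth symmetric 2-tensor
field `ψ₁` with `|ψ₁|_K < ε` (the C² norm of the components over `K`), one has
`ψ₀ + φ·ψ₁ ∈ Ψ`. -/
theorem stmt5 (p : ℕ) (hp : 2 ≤ p) (K : Set (Fin p → ℝ)) (hK : IsCompact K)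
    (φ : (Fin p → ℝ) → ℝ) (hφ : ContDiff ℝ (⊤ : ℕ∞) φ) (hφK : tsupport φ ⊆ K)
    (ψ₀ : (Fin p → ℝ) → Fin p → Fin p → ℝ) (hψ₀ : MemPsi ψ₀) :
    ∃ ε : ℝ, 0 < ε ∧ ∀ ψ₁ : (Fin p → ℝ) → Fin p → Fin p → ℝ, IsSmoothSym ψ₁ →
      (∀ x ∈ K, ∀ i j k l : Fin p,
        |ψ₁ x i j| < ε ∧ |pd (fun y => ψ₁ y i j) k x| < ε ∧
          |pd2 (fun y => ψ₁ y i j) k l x| < ε) →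
      MemPsi (fun x i j => ψ₀ x i j + φ x * ψ₁ x i j) := by
  classical
  obtain ⟨⟨hsm₀, hsym₀⟩, hmain₀⟩ := hψ₀
  rcases Set.eq_empty_or_nonempty K with hKe | ⟨x₀, hx₀K⟩
  · refine ⟨1, one_pos, fun ψ₁ hψ₁ _ => ?_⟩
    have hφ0 : ∀ x, φ x = 0 := by
      intro x
      by_contra h
      have hx : x ∈ tsupport φ := subset_tsupport φ (Function.mem_support.mpr h)
      have := hφK hx
      rw [hKe] at this
      exact this
    have heq : (fun x i j => ψ₀ x i j + φ x * ψ₁ x i j) = ψ₀ := by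
      funext x i j; rw [hφ0 x]; ring
    rw [heq]; exact ⟨⟨hsm₀, hsym₀⟩, hmain₀⟩
  -- continuity of the minimand
  have hGcont : Continuous (fun q : (Fin p → ℝ) × (Fin p → ℝ) × (Fin p → ℝ) =>
      jacobiForm ψ₀ q.1 q.2.1 q.2.2 q.2.2) := by
    unfold jacobiForm
    refine continuous_finset_sum _ fun i _ => continuous_finset_sum _ fun j _ =>
      continuous_finset_sum _ fun k _ => continuous_finset_sum _ fun l _ => ?_
    exact (((((curv_continuous hsm₀ i j k l).comp continuous_fst).mul
      ((continuous_apply i).comp (continuous_snd.comp continuous_snd))).mul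
      ((continuous_apply j).comp (continuous_fst.comp continuous_snd))).mul
      ((continuous_apply k).comp (continuous_fst.comp continuous_snd))).mul
      ((continuous_apply l).comp (continuous_snd.comp continuous_snd))
  have hdotc : ∀ (f g : ((Fin p → ℝ) × (Fin p → ℝ) × (Fin p → ℝ)) → (Fin p → ℝ)),
      Continuous f → Continuous g → Continuous (fun q => ∑ i, f q i * g q i) := by
    intro f g hf hg
    exact continuous_finset_sum _ fun i _ =>
      ((continuous_apply i).comp hf).mul ((continuous_apply i).comp hg)
  set S : Set ((Fin p → ℝ) × (Fin p → ℝ) × (Fin p → ℝ)) :=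
    {q | q.1 ∈ K ∧ (∑ i, q.2.1 i * q.2.1 i) = 1 ∧ (∑ i, q.2.2 i * q.2.2 i) = 1
      ∧ (∑ i, q.2.1 i * q.2.2 i) = 0} with hSdef
  have hSclosed : IsClosed S := by
    have h1 : IsClosed {q : (Fin p → ℝ) × (Fin p → ℝ) × (Fin p → ℝ) | q.1 ∈ K} :=
      hK.isClosed.preimage continuous_fst
    have h2 : IsClosed {q : (Fin p → ℝ) × (Fin p → ℝ) × (Fin p → ℝ) |
        (∑ i, q.2.1 i * q.2.1 i) = 1} :=
      isClosed_eq (hdotc (fun q => q.2.1) (fun q => q.2.1)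
        (continuous_fst.comp continuous_snd) (continuous_fst.comp continuous_snd))
        continuous_const
    have h3 : IsClosed {q : (Fin p → ℝ) × (Fin p → ℝ) × (Fin p → ℝ) |
        (∑ i, q.2.2 i * q.2.2 i) = 1} :=
      isClosed_eq (hdotc (fun q => q.2.2) (fun q => q.2.2)
        (continuous_snd.comp continuous_snd) (continuous_snd.comp continuous_snd))
        continuous_const
    have h4 : IsClosed {q : (Fin p → ℝ) × (Fin p → ℝ) × (Fin p → ℝ) |
        (∑ i, q.2.1 i * q.2.2 i) = 0} :=
      isClosed_eq (hdotc (fun q => q.2.1) (fun q => q.2.2)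
        (continuous_fst.comp continuous_snd) (continuous_snd.comp continuous_snd))
        continuous_const
    exact h1.inter (h2.inter (h3.inter h4))
  have hSsub : S ⊆ K ×ˢ (Metric.closedBall 0 1 ×ˢ Metric.closedBall 0 1) := by
    rintro ⟨x, X, Y⟩ ⟨hx, hX, hY, -⟩
    have hnorm : ∀ V : Fin p → ℝ, (∑ i, V i * V i) = 1 →
        V ∈ Metric.closedBall (0 : Fin p → ℝ) 1 := by
      intro V hV
      rw [Metric.mem_closedBall, dist_zero_right]
      rw [pi_norm_le_iff_of_nonneg zero_le_one]
      intro i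
      rw [Real.norm_eq_abs]
      exact comp_abs_le_one hV i
    exact ⟨hx, hnorm _ hX, hnorm _ hY⟩
  have hScomp : IsCompact S :=
    (hK.prod ((isCompact_closedBall _ _).prod (isCompact_closedBall _ _))).of_isClosed_subset
      hSclosed hSsub
  have h01 : (⟨0, by omega⟩ : Fin p) ≠ ⟨1, by omega⟩ := by simp [Fin.ext_iff]
  have hsingle : ∀ a : Fin p, (∑ i, Pi.single (M := fun _ => ℝ) a 1 i * Pi.single (M := fun _ => ℝ) a 1 i) = 1 := by
    intro a
    rw [Finset.sum_eq_single a]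
    · simp
    · intro b _ hb; rw [Pi.single_eq_of_ne hb]; ring
    · intro h; exact absurd (Finset.mem_univ a) h
  have horth : (∑ i, Pi.single (M := fun _ => ℝ) (⟨0, by omega⟩ : Fin p) 1 i
      * Pi.single (M := fun _ => ℝ) (⟨1, by omega⟩ : Fin p) 1 i) = 0 := by
    refine Finset.sum_eq_zero fun i _ => ?_
    by_cases h : i = (⟨0, by omega⟩ : Fin p)
    · have : i ≠ (⟨1, by omega⟩ : Fin p) := by rw [h]; exact h01
      rw [Pi.single_eq_of_ne this]; ring
    · rw [Pi.single_eq_of_ne h]; ring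
  have hSne : S.Nonempty :=
    ⟨(x₀, Pi.single (M := fun _ => ℝ) (⟨0, by omega⟩ : Fin p) 1, Pi.single (M := fun _ => ℝ) (⟨1, by omega⟩ : Fin p) 1),
      hx₀K, hsingle _, hsingle _, horth⟩
  obtain ⟨q₀, hq₀S, hq₀min⟩ := hScomp.exists_isMinOn hSne hGcont.continuousOn
  obtain ⟨x', X', Y'⟩ := q₀
  obtain ⟨hx'K, hXX', hYY', hXY'⟩ := hq₀S
  have hX'ne : X' ≠ 0 := by
    intro h
    rw [h] at hXX'
    simp at hXX'
  have hpos0 := (hmain₀ x' X' hX'ne).1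
  have hker0 := (hmain₀ x' X' hX'ne).2
  -- positivity of the minimum
  have hm : 0 < jacobiForm ψ₀ x' X' Y' Y' := by
    rcases lt_or_eq_of_le (hpos0 Y') with h | h
    · exact h
    exfalso
    have hzero : ∀ Z, jacobiForm ψ₀ x' X' Y' Z = 0 := by
      intro Z
      have hCz : 0 ≤ jacobiForm ψ₀ x' X' Z Z := hpos0 Z
      have ht : ∀ t : ℝ, 0 ≤ 2*t*(jacobiForm ψ₀ x' X' Y' Z)
          + t^2*(jacobiForm ψ₀ x' X' Z Z) := by
        intro t
        have h0 := hpos0 (Y' + t • Z)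
        simp only [jacobi_add_left, jacobi_add_right, jacobi_smul_left,
          jacobi_smul_right] at h0
        rw [jacobi_symm hsm₀ hsym₀ x' X' Z Y'] at h0
        rw [← h] at h0
        nlinarith [h0]
      rcases eq_or_lt_of_le hCz with hC0 | hC0
      · have h1 := ht (-(jacobiForm ψ₀ x' X' Y' Z))
        have hB2 : jacobiForm ψ₀ x' X' Y' Z * jacobiForm ψ₀ x' X' Y' Z ≤ 0 := by
          nlinarith [h1]
        exact mul_self_eq_zero.mp (le_antisymm hB2 (mul_self_nonneg _))
      · have h1 := ht (-(jacobiForm ψ₀ x' X' Y' Z) / jacobiForm ψ₀ x' X' Z Z)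
        have h2 : 2*(-(jacobiForm ψ₀ x' X' Y' Z) / jacobiForm ψ₀ x' X' Z Z)
              *(jacobiForm ψ₀ x' X' Y' Z)
            + (-(jacobiForm ψ₀ x' X' Y' Z) / jacobiForm ψ₀ x' X' Z Z)^2
              *(jacobiForm ψ₀ x' X' Z Z)
            = -((jacobiForm ψ₀ x' X' Y' Z)^2) / jacobiForm ψ₀ x' X' Z Z := by
          field_simp
          ring
        rw [h2] at h1
        have h4 : 0 ≤ -((jacobiForm ψ₀ x' X' Y' Z)^2) := by
          have h5 := mul_nonneg h1 hC0.le
          rwa [div_mul_cancel₀ _ hC0.ne'] at h5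
        have h6 : (jacobiForm ψ₀ x' X' Y' Z)^2 = 0 :=
          le_antisymm (by linarith) (sq_nonneg _)
        exact sq_eq_zero_iff.mp h6
    obtain ⟨c, hc⟩ := (hker0 Y').mp hzero
    have hYX : (∑ i, X' i * Y' i) = c * (∑ i, X' i * X' i) := by
      rw [hc, Finset.mul_sum]
      exact Finset.sum_congr rfl fun i _ => by
        simp only [Pi.smul_apply, smul_eq_mul]; ring
    rw [hXX', hXY'] at hYX
    have hc0 : c = 0 := by linarith
    rw [hc0, zero_smul] at hc
    rw [hc] at hYY'
    simp at hYY'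
  -- bound for φ and its derivatives on K
  have hgcont : Continuous (fun x => |φ x| + (∑ j, |pd φ j x|) + ∑ j, ∑ k, |pd2 φ j k x|) := by
    refine (hφ.continuous.abs.add ?_).add ?_
    · exact continuous_finset_sum _ fun j _ => (pd_contDiff' hφ j).continuous.abs
    · exact continuous_finset_sum _ fun j _ => continuous_finset_sum _ fun k _ =>
        (pd2_contDiff' hφ j k).continuous.abs
  obtain ⟨C₀, hC₀⟩ := hK.exists_bound_of_continuousOn hgcont.continuousOn
  set B : ℝ := max C₀ 0 + 1 with hBdef
  have hB1 : (1:ℝ) ≤ B := by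
    have : (0:ℝ) ≤ max C₀ 0 := le_max_right _ _
    linarith
  have hBpos : (0:ℝ) < B := lt_of_lt_of_le one_pos hB1
  have hφB : ∀ x ∈ K, |φ x| ≤ B ∧ (∀ j, |pd φ j x| ≤ B) ∧ (∀ j k, |pd2 φ j k x| ≤ B) := by
    intro x hx
    have hg := hC₀ x hx
    rw [Real.norm_eq_abs] at hg
    have hgx : |φ x| + (∑ j, |pd φ j x|) + (∑ j, ∑ k, |pd2 φ j k x|) ≤ C₀ :=
      le_trans (le_abs_self _) hg
    have hs1 : 0 ≤ ∑ j, |pd φ j x| := Finset.sum_nonneg fun _ _ => abs_nonneg _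
    have hs2 : 0 ≤ ∑ j, ∑ k, |pd2 φ j k x| :=
      Finset.sum_nonneg fun _ _ => Finset.sum_nonneg fun _ _ => abs_nonneg _
    have hmax : C₀ ≤ max C₀ 0 := le_max_left _ _
    refine ⟨by linarith, fun j => ?_, fun j k => ?_⟩
    · have h1 : |pd φ j x| ≤ ∑ j', |pd φ j' x| :=
        Finset.single_le_sum (f := fun a => |pd φ a x|) (fun _ _ => abs_nonneg _) (Finset.mem_univ j)
      linarith [abs_nonneg (φ x)]
    · have h1 : |pd2 φ j k x| ≤ ∑ k', |pd2 φ j k' x| :=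
        Finset.single_le_sum (f := fun a => |pd2 φ j a x|) (fun _ _ => abs_nonneg _) (Finset.mem_univ k)
      have h2 : (∑ k', |pd2 φ j k' x|) ≤ ∑ j', ∑ k', |pd2 φ j' k' x| :=
        Finset.single_le_sum (f := fun j' => ∑ k', |pd2 φ j' k' x|)
          (fun _ _ => Finset.sum_nonneg fun _ _ => abs_nonneg _) (Finset.mem_univ j)
      linarith [abs_nonneg (φ x)]
  have hdpos : (0:ℝ) < 8 * B * (p:ℝ)^4 + 1 := by
    have hp4 : (0:ℝ) ≤ (p:ℝ)^4 := by positivity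
    nlinarith [hBpos]
  set ε : ℝ := jacobiForm ψ₀ x' X' Y' Y' / (8 * B * (p:ℝ)^4 + 1) with hεdef
  have hεpos : 0 < ε := div_pos hm hdpos
  have hεd : ε * (8 * B * (p:ℝ)^4 + 1) = jacobiForm ψ₀ x' X' Y' Y' := by
    rw [hεdef]; exact div_mul_cancel₀ _ hdpos.ne'
  refine ⟨ε, hεpos, ?_⟩
  intro ψ₁ hψ₁ hb
  obtain ⟨hsm₁, hsym₁⟩ := hψ₁
  have hsmχ : ∀ a b : Fin p, ContDiff ℝ (⊤ : ℕ∞) fun y => φ y * ψ₁ y a b :=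
    fun a b => hφ.mul (hsm₁ a b)
  have hcadd : ∀ (i j k l : Fin p) (x : Fin p → ℝ),
      curv (fun y a b => ψ₀ y a b + φ y * ψ₁ y a b) i j k l x
        = curv ψ₀ i j k l x + curv (fun y a b => φ y * ψ₁ y a b) i j k l x :=
    fun i j k l x => curv_add' hsm₀ hsmχ (fun _ _ _ => rfl) i j k l x
  have hJadd : ∀ x X Y Z : Fin p → ℝ,
      jacobiForm (fun y a b => ψ₀ y a b + φ y * ψ₁ y a b) x X Y Z
        = jacobiForm ψ₀ x X Y Z + jacobiForm (fun y a b => φ y * ψ₁ y a b) x X Y Z := by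
    intro x X Y Z
    unfold jacobiForm
    rw [sum4_congr (g := fun i j k l => curv ψ₀ i j k l x * Y i * X j * X k * Z l
        + curv (fun y a b => φ y * ψ₁ y a b) i j k l x * Y i * X j * X k * Z l)
      (fun i j k l => by rw [hcadd]; ring)]
    simp [Finset.sum_add_distrib]
  -- perturbation bound on K
  have habs4 : ∀ a1 b1 c1 d1 : ℝ, |a1 + b1 + c1 + d1| ≤ |a1| + |b1| + |c1| + |d1| :=
    fun a1 b1 c1 d1 => abs_le.mpr
      ⟨by linarith [neg_abs_le a1, neg_abs_le b1, neg_abs_le c1, neg_abs_le d1],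
       by linarith [le_abs_self a1, le_abs_self b1, le_abs_self c1, le_abs_self d1]⟩
  have habs4' : ∀ a1 b1 c1 d1 : ℝ, |a1 + b1 - c1 - d1| ≤ |a1| + |b1| + |c1| + |d1| :=
    fun a1 b1 c1 d1 => abs_le.mpr
      ⟨by linarith [neg_abs_le a1, neg_abs_le b1, le_abs_self c1, le_abs_self d1],
       by linarith [le_abs_self a1, le_abs_self b1, neg_abs_le c1, neg_abs_le d1]⟩
  have hpert : ∀ x ∈ K, ∀ i j k l : Fin p,
      |curv (fun y a b => φ y * ψ₁ y a b) i j k l x| ≤ 8 * B * ε := by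
    intro x hx i j k l
    have hpd2b : ∀ a b c d1 : Fin p, |pd2 (fun y => φ y * ψ₁ y a b) c d1 x| ≤ 4 * (B * ε) := by
      intro a b c d1
      rw [pd2_mul' hφ (hsm₁ a b) c d1 x]
      obtain ⟨hφ1, hφ2, hφ3⟩ := hφB x hx
      have e1 : |pd2 φ c d1 x * ψ₁ x a b| ≤ B * ε := by
        rw [abs_mul]
        exact mul_le_mul (hφ3 c d1) (hb x hx a b c d1).1.le (abs_nonneg _) hBpos.le
      have e2 : |pd φ d1 x * pd (fun y => ψ₁ y a b) c x| ≤ B * ε := by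
        rw [abs_mul]
        exact mul_le_mul (hφ2 d1) (hb x hx a b c d1).2.1.le (abs_nonneg _) hBpos.le
      have e3 : |pd φ c x * pd (fun y => ψ₁ y a b) d1 x| ≤ B * ε := by
        rw [abs_mul]
        exact mul_le_mul (hφ2 c) (hb x hx a b d1 c).2.1.le (abs_nonneg _) hBpos.le
      have e4 : |φ x * pd2 (fun y => ψ₁ y a b) c d1 x| ≤ B * ε := by
        rw [abs_mul]
        exact mul_le_mul hφ1 (hb x hx a b c d1).2.2.le (abs_nonneg _) hBpos.le
      calc |pd2 φ c d1 x * ψ₁ x a b + pd φ d1 x * pd (fun y => ψ₁ y a b) c x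
            + pd φ c x * pd (fun y => ψ₁ y a b) d1 x + φ x * pd2 (fun y => ψ₁ y a b) c d1 x|
          ≤ |pd2 φ c d1 x * ψ₁ x a b| + |pd φ d1 x * pd (fun y => ψ₁ y a b) c x|
            + |pd φ c x * pd (fun y => ψ₁ y a b) d1 x|
            + |φ x * pd2 (fun y => ψ₁ y a b) c d1 x| := habs4 _ _ _ _
        _ ≤ 4 * (B * ε) := by linarith
    have hA := hpd2b i l j k
    have hB2 := hpd2b j k i l
    have hC2 := hpd2b i k j l
    have hD2 := hpd2b j l i k
    unfold curv
    rw [abs_mul]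
    have hh : |(-(1/2) : ℝ)| = 1/2 := by norm_num
    rw [hh]
    have htr := habs4' (pd2 (fun y => φ y * ψ₁ y i l) j k x)
      (pd2 (fun y => φ y * ψ₁ y j k) i l x)
      (pd2 (fun y => φ y * ψ₁ y i k) j l x)
      (pd2 (fun y => φ y * ψ₁ y j l) i k x)
    nlinarith [htr]
  -- quantitative lower bound on normalized frames
  have hq₀min' : ∀ x ∈ K, ∀ X W : Fin p → ℝ,
      (∑ i, X i * X i) = 1 → (∑ i, W i * W i) = 1 → (∑ i, X i * W i) = 0 →
      ε ≤ jacobiForm (fun y a b => ψ₀ y a b + φ y * ψ₁ y a b) x X W W := by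
    intro x hx X W hXX hWW hXW
    have hmem : (x, X, W) ∈ S := ⟨hx, hXX, hWW, hXW⟩
    have h₀ : jacobiForm ψ₀ x' X' Y' Y' ≤ jacobiForm ψ₀ x X W W := isMinOn_iff.mp hq₀min (x, X, W) hmem
    have hχb : |jacobiForm (fun y a b => φ y * ψ₁ y a b) x X W W| ≤ (p:ℝ)^4 * (8 * B * ε) :=
      jacobi_abs_le (fun i j k l => hpert x hx i j k l)
        (comp_abs_le_one hXX) (comp_abs_le_one hWW) (comp_abs_le_one hWW)
    rw [hJadd]
    have habs := (abs_le.mp hχb).1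
    nlinarith [h₀, habs, hεd]
  -- the key positivity statement
  have hkey : ∀ x ∈ K, ∀ X : Fin p → ℝ, X ≠ 0 → ∀ W : Fin p → ℝ, W ≠ 0 →
      (∑ i, X i * W i) = 0 →
      0 < jacobiForm (fun y a b => ψ₀ y a b + φ y * ψ₁ y a b) x X W W := by
    intro x hx X hXne W hWne hXW
    have hXX : 0 < ∑ i, X i * X i := by
      obtain ⟨i, hi⟩ := Function.ne_iff.mp hXne
      exact Finset.sum_pos' (fun j _ => mul_self_nonneg _)
        ⟨i, Finset.mem_univ i, mul_self_pos.mpr (by simpa using hi)⟩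
    have hWW : 0 < ∑ i, W i * W i := by
      obtain ⟨i, hi⟩ := Function.ne_iff.mp hWne
      exact Finset.sum_pos' (fun j _ => mul_self_nonneg _)
        ⟨i, Finset.mem_univ i, mul_self_pos.mpr (by simpa using hi)⟩
    obtain ⟨s, hs, hs2⟩ : ∃ s : ℝ, 0 < s ∧ s * s = ∑ i, X i * X i :=
      ⟨Real.sqrt _, Real.sqrt_pos.mpr hXX, Real.mul_self_sqrt hXX.le⟩
    obtain ⟨t, ht, ht2⟩ : ∃ t : ℝ, 0 < t ∧ t * t = ∑ i, W i * W i :=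
      ⟨Real.sqrt _, Real.sqrt_pos.mpr hWW, Real.mul_self_sqrt hWW.le⟩
    have hXdec : X = s • (s⁻¹ • X) := by rw [smul_smul, mul_inv_cancel₀ hs.ne', one_smul]
    have hWdec : W = t • (t⁻¹ • W) := by rw [smul_smul, mul_inv_cancel₀ ht.ne', one_smul]
    have hX'dot : (∑ i, (s⁻¹ • X) i * (s⁻¹ • X) i) = 1 := by
      have heq : (∑ i, (s⁻¹ • X) i * (s⁻¹ • X) i) = s⁻¹ * s⁻¹ * ∑ i, X i * X i := by
        rw [Finset.mul_sum]
        exact Finset.sum_congr rfl fun i _ => by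
          simp only [Pi.smul_apply, smul_eq_mul]; ring
      rw [heq, ← hs2]
      field_simp
    have hW'dot : (∑ i, (t⁻¹ • W) i * (t⁻¹ • W) i) = 1 := by
      have heq : (∑ i, (t⁻¹ • W) i * (t⁻¹ • W) i) = t⁻¹ * t⁻¹ * ∑ i, W i * W i := by
        rw [Finset.mul_sum]
        exact Finset.sum_congr rfl fun i _ => by
          simp only [Pi.smul_apply, smul_eq_mul]; ring
      rw [heq, ← ht2]
      field_simp
    have hXW' : (∑ i, (s⁻¹ • X) i * (t⁻¹ • W) i) = 0 := by
      have heq : (∑ i, (s⁻¹ • X) i * (t⁻¹ • W) i) = s⁻¹ * t⁻¹ * ∑ i, X i * W i := by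
        rw [Finset.mul_sum]
        exact Finset.sum_congr rfl fun i _ => by
          simp only [Pi.smul_apply, smul_eq_mul]; ring
      rw [heq, hXW, mul_zero]
    have hJ := hq₀min' x hx _ _ hX'dot hW'dot hXW'
    have hJpos : 0 < jacobiForm (fun y a b => ψ₀ y a b + φ y * ψ₁ y a b) x
        (s⁻¹ • X) (t⁻¹ • W) (t⁻¹ • W) := lt_of_lt_of_le hεpos hJ
    have hscale : jacobiForm (fun y a b => ψ₀ y a b + φ y * ψ₁ y a b) x X W W
        = s^2 * (t * (t * jacobiForm (fun y a b => ψ₀ y a b + φ y * ψ₁ y a b) x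
            (s⁻¹ • X) (t⁻¹ • W) (t⁻¹ • W))) := by
      conv_lhs => rw [hXdec, hWdec]
      rw [jacobi_smul_X, jacobi_smul_left, jacobi_smul_right]
    rw [hscale]
    exact mul_pos (pow_pos hs 2) (mul_pos ht (mul_pos ht hJpos))
  -- assemble MemPsi
  refine ⟨⟨fun i j => (hsm₀ i j).add (hφ.mul (hsm₁ i j)),
    fun x i j => by
      show ψ₀ x i j + φ x * ψ₁ x i j = ψ₀ x j i + φ x * ψ₁ x j i
      rw [hsym₀ x i j, hsym₁ x i j]⟩, ?_⟩
  intro x X hXne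
  by_cases hx : x ∈ K
  · -- x in K : quantitative argument
    have hXX : 0 < ∑ i, X i * X i := by
      obtain ⟨i, hi⟩ := Function.ne_iff.mp hXne
      exact Finset.sum_pos' (fun j _ => mul_self_nonneg _)
        ⟨i, Finset.mem_univ i, mul_self_pos.mpr (by simpa using hi)⟩
    have hdec : ∀ Y : Fin p → ℝ, ∃ c : ℝ, ∃ W : Fin p → ℝ,
        (∑ i, X i * W i) = 0 ∧
        jacobiForm (fun y a b => ψ₀ y a b + φ y * ψ₁ y a b) x X Y Y
          = jacobiForm (fun y a b => ψ₀ y a b + φ y * ψ₁ y a b) x X W W ∧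
        (W = 0 → Y = c • X) := by
      intro Y
      set c : ℝ := (∑ i, X i * Y i) / (∑ i, X i * X i) with hcdef
      refine ⟨c, Y - c • X, ?_, ?_, ?_⟩
      · have heq : (∑ i, X i * (Y - c • X) i)
            = (∑ i, X i * Y i) - c * (∑ i, X i * X i) := by
          rw [Finset.mul_sum, ← Finset.sum_sub_distrib]
          exact Finset.sum_congr rfl fun i _ => by
            simp only [Pi.sub_apply, Pi.smul_apply, smul_eq_mul]; ring
        rw [heq, hcdef, div_mul_cancel₀ _ hXX.ne']
        ring
      · have hYeq : Y = c • X + (Y - c • X) := by abel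
        conv_lhs => rw [hYeq]
        rw [jacobi_add_left, jacobi_smul_left, jacobi_X_left,
          jacobi_add_right, jacobi_smul_right, jacobi_X_right]
        ring
      · intro hW
        have := sub_eq_zero.mp hW
        exact this
    constructor
    · intro Y
      obtain ⟨c, W, hXW, hJeq, hW0⟩ := hdec Y
      rw [hJeq]
      by_cases hW : W = 0
      · rw [hW, jacobi_zero_left]
      · exact (hkey x hx X hXne W hW hXW).le
    · intro Y
      constructor
      · intro hZ
        obtain ⟨c, W, hXW, hJeq, hW0⟩ := hdec Y
        by_cases hW : W = 0
        · exact ⟨c, hW0 hW⟩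
        · exact absurd (hZ Y) (by rw [hJeq]; exact (hkey x hx X hXne W hW hXW).ne')
      · rintro ⟨c, rfl⟩ Z
        rw [jacobi_smul_left, jacobi_X_left, mul_zero]
  · -- x outside K : the tensor is unperturbed near x
    have hnot : x ∉ tsupport φ := fun h => hx (hφK h)
    have hev : ∀ a b : Fin p, (fun y => φ y * ψ₁ y a b) =ᶠ[nhds x] 0 := by
      intro a b
      filter_upwards [(isClosed_tsupport φ).isOpen_compl.mem_nhds hnot] with y hy
      have : φ y = 0 := image_eq_zero_of_notMem_tsupport hy
      simp [this]
    have hcχ : ∀ i j k l : Fin p, curv (fun y a b => φ y * ψ₁ y a b) i j k l x = 0 := by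
      intro i j k l
      unfold curv
      rw [pd2_eq_zero_of_eventuallyEq_zero (hev i l),
        pd2_eq_zero_of_eventuallyEq_zero (hev j k),
        pd2_eq_zero_of_eventuallyEq_zero (hev i k),
        pd2_eq_zero_of_eventuallyEq_zero (hev j l)]
      ring
    have hJeq : ∀ X1 Y1 Z1 : Fin p → ℝ,
        jacobiForm (fun y a b => ψ₀ y a b + φ y * ψ₁ y a b) x X1 Y1 Z1
          = jacobiForm ψ₀ x X1 Y1 Z1 := by
      intro X1 Y1 Z1
      rw [hJadd]
      have hz : jacobiForm (fun y a b => φ y * ψ₁ y a b) x X1 Y1 Z1 = 0 := by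
        unfold jacobiForm
        refine Finset.sum_eq_zero fun i _ => Finset.sum_eq_zero fun j _ =>
          Finset.sum_eq_zero fun k _ => Finset.sum_eq_zero fun l _ => ?_
        rw [hcχ i j k l]
        ring
      rw [hz, add_zero]
    refine ⟨fun Y => by rw [hJeq]; exact (hmain₀ x X hXne).1 Y, fun Y => ?_⟩
    constructor
    · intro h
      exact ((hmain₀ x X hXne).2 Y).mp fun Z => by rw [← hJeq]; exact h Z
    · intro h Z
      rw [hJeq]
      exact ((hmain₀ x X hXne).2 Y).mpr h Z
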